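/- arXiv:2309.03765 — 2 statements merged into one kernel-verified Lean document; each statement's English description precedes it below -/
import Mathlib

section
/- Let M = SE₂(3) × se₂(3) and let D = SE₂(3) ⋉ se₂(3) be the group of pairs (C, γ) with C ∈ SE₂(3), γ ∈ se₂(3) and product (C_X, γ_X)(C_Y, γ_Y) = (C_X C_Y, γ_X + C_X γ_Y C_X⁻¹). Then the map φ : D × M → M defined by φ((C, γ), (P, B)) = (P C, C⁻¹ (B − γ) C) is a transitive right group action of D on M. -/
/-! Both `SE₂(3)` and `se₂(3)` are handled in block form: products with `se23mk A a b` are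
computed blockwise, and `se₂(3)` consists exactly of the matrices
`[[S, u, v], [0, 0, 0], [0, 0, 0]]` with `S` skew-symmetric, a condition preserved by the
conjugation `S ↦ A S Aᵀ`, `A ∈ SO(3)`. Since `SE₂(3)` is a group of invertible matrices, the
action axioms reduce to identities between invertible matrices, and `(P₁, B₁)` is moved to
`(P₂, B₂)` by `C = P₁⁻¹ P₂`, `γ = B₁ - C B₂ C⁻¹`. -/

open Matrix

noncomputable section

abbrev V3 := Fin 3 → ℝ
abbrev Mat3 := Matrix (Fin 3) (Fin 3) ℝ
abbrev Mat5 := Matrix (Fin 5) (Fin 5) ℝ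

/-- `SO(3)`: real 3×3 matrices with `Rᵀ R = I` and `det R = 1`. -/
def SO3 (A : Mat3) : Prop := Aᵀ * A = 1 ∧ A.det = 1

/-- The 5×5 block matrix `[[A, a, b], [0, 1, 0], [0, 0, 1]]`. -/
def se23mk (A : Mat3) (a b : V3) : Mat5 :=
  Matrix.of fun i j =>
    if hi : (i : ℕ) < 3 then
      if hj : (j : ℕ) < 3 then A ⟨(i : ℕ), hi⟩ ⟨(j : ℕ), hj⟩
      else if (j : ℕ) = 3 then a ⟨(i : ℕ), hi⟩ else b ⟨(i : ℕ), hi⟩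
    else if (i : ℕ) = (j : ℕ) then 1 else 0

/-- `SE₂(3)`: 5×5 block matrices `[[A, a, b], [0, 1, 0], [0, 0, 1]]` with `A ∈ SO(3)`. -/
def SE23 (C : Mat5) : Prop := ∃ (A : Mat3) (a b : V3), SO3 A ∧ C = se23mk A a b

/-- `x^∧`: the 3×3 skew-symmetric matrix with `x^∧ y = x × y`. -/
def wedge (x : V3) : Mat3 :=
  !![0, -x 2, x 1; x 2, 0, -x 0; -x 1, x 0, 0]

/-- The 5×5 block matrix `[[ω^∧, u, v], [0, 0, 0], [0, 0, 0]]`. -/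
def se23algMk (ω u v : V3) : Mat5 :=
  Matrix.of fun i j =>
    if hi : (i : ℕ) < 3 then
      if hj : (j : ℕ) < 3 then wedge ω ⟨(i : ℕ), hi⟩ ⟨(j : ℕ), hj⟩
      else if (j : ℕ) = 3 then u ⟨(i : ℕ), hi⟩ else v ⟨(i : ℕ), hi⟩
    else 0

/-- `se₂(3)`: 5×5 block matrices `[[ω^∧, u, v], [0, 0, 0], [0, 0, 0]]`. -/
def se23Alg (M : Mat5) : Prop := ∃ ω u v : V3, M = se23algMk ω u v

/-- The product of the Tangent group `D = SE₂(3) ⋉ se₂(3)`: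
`(C_X, γ_X)(C_Y, γ_Y) = (C_X C_Y, γ_X + C_X γ_Y C_X⁻¹)`. -/
def tgMul (X Y : Mat5 × Mat5) : Mat5 × Mat5 :=
  (X.1 * Y.1, X.2 + X.1 * Y.2 * X.1⁻¹)

/-- The action `φ((C, γ), (P, B)) = (P C, C⁻¹ (B − γ) C)` of `D = SE₂(3) ⋉ se₂(3)`
on `M = SE₂(3) × se₂(3)`. -/
def phiTG (C γ P B : Mat5) : Mat5 × Mat5 := (P * C, C⁻¹ * (B - γ) * C)

lemma Matrix.nonsing_inv_mul_conj_mul {n R : Type*} [Fintype n] [DecidableEq n] [CommRing R]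
    {C : Matrix n n R} (hC : IsUnit C.det) (X : Matrix n n R) :
    C⁻¹ * (C * X * C⁻¹) * C = X := by
  rw [← mul_assoc C⁻¹, Matrix.nonsing_inv_mul_cancel_right C _ hC,
    Matrix.nonsing_inv_mul_cancel_left C _ hC]

lemma SO3.mul {A B : Mat3} (hA : SO3 A) (hB : SO3 B) : SO3 (A * B) := by
  refine ⟨?_, by rw [det_mul, hA.2, hB.2, mul_one]⟩
  calc (A * B)ᵀ * (A * B) = Bᵀ * (Aᵀ * A) * B := by rw [transpose_mul]; noncomm_ring
    _ = 1 := by rw [hA.1, mul_one, hB.1]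

lemma SO3.transpose {A : Mat3} (hA : SO3 A) : SO3 Aᵀ :=
  ⟨by rw [transpose_transpose]; exact mul_eq_one_comm.mp hA.1, by rw [det_transpose]; exact hA.2⟩

lemma se23mk_one : se23mk 1 0 0 = 1 := by
  ext i j
  fin_cases i <;> fin_cases j <;> simp [se23mk, one_apply, Fin.ext_iff]

lemma se23mk_mul_se23mk (A A' : Mat3) (a b a' b' : V3) :
    se23mk A a b * se23mk A' a' b' = se23mk (A * A') (A *ᵥ a' + a) (A *ᵥ b' + b) := by
  ext i j
  simp only [se23mk, mul_apply, of_apply, Fin.sum_univ_five]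
  fin_cases i <;> fin_cases j <;> simp [mulVec, dotProduct, Fin.sum_univ_three]

lemma se23mk_mul_se23mk_inverse {A : Mat3} (hA : SO3 A) (a b : V3) :
    se23mk A a b * se23mk Aᵀ (-(Aᵀ *ᵥ a)) (-(Aᵀ *ᵥ b)) = 1 := by
  have hAAt : A * Aᵀ = 1 := mul_eq_one_comm.mp hA.1
  rw [se23mk_mul_se23mk, hAAt, mulVec_neg, mulVec_neg, mulVec_mulVec, mulVec_mulVec, hAAt,
    one_mulVec, one_mulVec, neg_add_cancel, neg_add_cancel, se23mk_one]

lemma se23mk_inv {A : Mat3} (hA : SO3 A) (a b : V3) :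
    (se23mk A a b)⁻¹ = se23mk Aᵀ (-(Aᵀ *ᵥ a)) (-(Aᵀ *ᵥ b)) :=
  inv_eq_right_inv (se23mk_mul_se23mk_inverse hA a b)

lemma SE23.mul {C D : Mat5} (hC : SE23 C) (hD : SE23 D) : SE23 (C * D) := by
  obtain ⟨A, a, b, hA, rfl⟩ := hC
  obtain ⟨A', a', b', hA', rfl⟩ := hD
  exact ⟨A * A', _, _, hA.mul hA', se23mk_mul_se23mk A A' a b a' b'⟩

lemma SE23.inv {C : Mat5} (hC : SE23 C) : SE23 C⁻¹ := by
  obtain ⟨A, a, b, hA, rfl⟩ := hC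
  exact ⟨Aᵀ, _, _, hA.transpose, se23mk_inv hA a b⟩

lemma SE23.isUnit_det {C : Mat5} (hC : SE23 C) : IsUnit C.det := by
  obtain ⟨A, a, b, hA, rfl⟩ := hC
  exact isUnit_det_of_right_inverse (se23mk_mul_se23mk_inverse hA a b)

/-- `[[M, u, v], [0, 0, 0], [0, 0, 0]]`: `se23algMk` with an arbitrary top-left block. -/
def topBlockMk (M : Mat3) (u v : V3) : Mat5 :=
  Matrix.of fun i j =>
    if hi : (i : ℕ) < 3 then
      if hj : (j : ℕ) < 3 then M ⟨(i : ℕ), hi⟩ ⟨(j : ℕ), hj⟩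
      else if (j : ℕ) = 3 then u ⟨(i : ℕ), hi⟩ else v ⟨(i : ℕ), hi⟩
    else 0

lemma se23mk_mul_topBlockMk (A : Mat3) (a b : V3) (M : Mat3) (u v : V3) :
    se23mk A a b * topBlockMk M u v = topBlockMk (A * M) (A *ᵥ u) (A *ᵥ v) := by
  ext i j
  simp only [se23mk, topBlockMk, mul_apply, of_apply, Fin.sum_univ_five]
  fin_cases i <;> fin_cases j <;> simp [mulVec, dotProduct, Fin.sum_univ_three]

lemma topBlockMk_mul_se23mk (M : Mat3) (u v : V3) (A : Mat3) (a b : V3) :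
    topBlockMk M u v * se23mk A a b = topBlockMk (M * A) (M *ᵥ a + u) (M *ᵥ b + v) := by
  ext i j
  simp only [se23mk, topBlockMk, mul_apply, of_apply, Fin.sum_univ_five]
  fin_cases i <;> fin_cases j <;> simp [mulVec, dotProduct, Fin.sum_univ_three]

lemma topBlockMk_sub (M M' : Mat3) (u v u' v' : V3) :
    topBlockMk M u v - topBlockMk M' u' v' = topBlockMk (M - M') (u - u') (v - v') := by
  ext i j
  fin_cases i <;> fin_cases j <;> simp [topBlockMk]

lemma wedge_transpose (x : V3) : (wedge x)ᵀ = -wedge x := by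
  ext i j
  fin_cases i <;> fin_cases j <;> simp [wedge]

lemma eq_wedge_of_transpose_eq_neg {S : Mat3} (hS : Sᵀ = -S) :
    S = wedge ![S 2 1, S 0 2, S 1 0] := by
  have h : ∀ i j, S j i = -S i j := fun i j => congrFun (congrFun hS i) j
  ext i j
  fin_cases i <;> fin_cases j <;> simp [wedge] <;>
    linarith [h 0 0, h 1 1, h 2 2, h 0 1, h 0 2, h 1 2]

lemma se23Alg_iff (M : Mat5) :
    se23Alg M ↔ ∃ (S : Mat3) (u v : V3), Sᵀ = -S ∧ M = topBlockMk S u v := by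
  constructor
  · rintro ⟨ω, u, v, rfl⟩
    exact ⟨wedge ω, u, v, wedge_transpose ω, rfl⟩
  · rintro ⟨S, u, v, hS, rfl⟩
    exact ⟨_, u, v, congrArg (topBlockMk · u v) (eq_wedge_of_transpose_eq_neg hS)⟩

lemma se23Alg.sub {γ δ : Mat5} (hγ : se23Alg γ) (hδ : se23Alg δ) : se23Alg (γ - δ) := by
  obtain ⟨S, u, v, hS, rfl⟩ := (se23Alg_iff γ).mp hγ
  obtain ⟨S', u', v', hS', rfl⟩ := (se23Alg_iff δ).mp hδ
  refine (se23Alg_iff _).mpr ⟨S - S', _, _, ?_, topBlockMk_sub S S' u v u' v'⟩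
  rw [transpose_sub, hS, hS', neg_sub_neg, neg_sub]

lemma se23Alg.conj {C γ : Mat5} (hγ : se23Alg γ) (hC : SE23 C) : se23Alg (C * γ * C⁻¹) := by
  obtain ⟨A, a, b, hA, rfl⟩ := hC
  obtain ⟨S, u, v, hS, rfl⟩ := (se23Alg_iff γ).mp hγ
  rw [se23mk_inv hA, se23mk_mul_topBlockMk, topBlockMk_mul_se23mk]
  refine (se23Alg_iff _).mpr ⟨A * S * Aᵀ, _, _, ?_, rfl⟩
  rw [transpose_mul, transpose_mul, transpose_transpose, hS, Matrix.neg_mul, Matrix.mul_neg,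
    mul_assoc]

lemma se23Alg.inv_conj {C γ : Mat5} (hγ : se23Alg γ) (hC : SE23 C) : se23Alg (C⁻¹ * γ * C) := by
  simpa only [nonsing_inv_nonsing_inv C hC.isUnit_det] using hγ.conj hC.inv

lemma phiTG_one (P B : Mat5) : phiTG 1 0 P B = (P, B) := by
  simp [phiTG]

lemma phiTG_phiTG {CY : Mat5} (hCY : IsUnit CY.det) (CX γX γY P B : Mat5) :
    phiTG CX γX (phiTG CY γY P B).1 (phiTG CY γY P B).2
      = phiTG (tgMul (CY, γY) (CX, γX)).1 (tgMul (CY, γY) (CX, γX)).2 P B := by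
  simp only [phiTG, tgMul, Matrix.mul_inv_rev, mul_assoc, Prod.mk.injEq, true_and]
  conv_lhs => rw [← Matrix.nonsing_inv_mul_conj_mul hCY γX]
  noncomm_ring

lemma phiTG_sub_conj {C : Mat5} (hC : IsUnit C.det) (P B B' : Mat5) :
    phiTG C (B - C * B' * C⁻¹) P B = (P * C, B') := by
  rw [phiTG, sub_sub_cancel, Matrix.nonsing_inv_mul_conj_mul hC]

/-- `φ` is a transitive right group action of `D = SE₂(3) ⋉ se₂(3)` on
`M = SE₂(3) × se₂(3)`. -/
theorem stmt6 :
    -- φ maps M into M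
    (∀ (C γ P B : Mat5), SE23 C → se23Alg γ → SE23 P → se23Alg B →
      SE23 (phiTG C γ P B).1 ∧ se23Alg (phiTG C γ P B).2) ∧
    -- identity axiom: φ((I₅, 0), ξ) = ξ
    (∀ (P B : Mat5), phiTG 1 0 P B = (P, B)) ∧
    -- compatibility axiom: φ(X, φ(Y, ξ)) = φ(Y X, ξ)
    (∀ (CX γX CY γY P B : Mat5),
      SE23 CX → se23Alg γX → SE23 CY → se23Alg γY → SE23 P → se23Alg B →
      phiTG CX γX (phiTG CY γY P B).1 (phiTG CY γY P B).2
        = phiTG (tgMul (CY, γY) (CX, γX)).1 (tgMul (CY, γY) (CX, γX)).2 P B) ∧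
    -- transitivity
    (∀ (P₁ B₁ P₂ B₂ : Mat5), SE23 P₁ → se23Alg B₁ → SE23 P₂ → se23Alg B₂ →
      ∃ (C γ : Mat5), SE23 C ∧ se23Alg γ ∧ phiTG C γ P₁ B₁ = (P₂, B₂)) := by
  refine ⟨fun C γ P B hC hγ hP hB => ⟨hP.mul hC, (hB.sub hγ).inv_conj hC⟩, phiTG_one,
    fun CX γX CY γY P B _ _ hCY _ _ _ => phiTG_phiTG hCY.isUnit_det CX γX γY P B, ?_⟩
  intro P₁ B₁ P₂ B₂ hP₁ hB₁ hP₂ hB₂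
  have hC : SE23 (P₁⁻¹ * P₂) := hP₁.inv.mul hP₂
  refine ⟨P₁⁻¹ * P₂, B₁ - (P₁⁻¹ * P₂) * B₂ * (P₁⁻¹ * P₂)⁻¹, hC, hB₁.sub (hB₂.conj hC), ?_⟩
  rw [phiTG_sub_conj hC.isUnit_det, Matrix.mul_nonsing_inv_cancel_left P₁ P₂ hP₁.isUnit_det]
end
end

section
/- Let M = SE(3) × se(3) × ℝ³ and let A = (SE(3) ⋉ se(3)) × ℝ³ be the group of triples (B, β, c) with B ∈ SE(3), β ∈ se(3), c ∈ ℝ³ and product (B_X, β_X, c_X)(B_Y, β_Y, c_Y) = (B_X B_Y, β_X + B_X β_Y B_X⁻¹, c_X + c_Y). Then the map φ : A × M → M defined by φ((B, β, c), (P, Bᵦ, p)) = (P B, B⁻¹ (Bᵦ − β) B, p + c) is a transitive right group action of A on M. -/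
open Matrix

noncomputable section

abbrev Mat4 := Matrix (Fin 4) (Fin 4) ℝ

/-- The 4×4 block matrix `[[A, a], [0, 1]]`. -/
def se3mk (A : Mat3) (a : V3) : Mat4 :=
  Matrix.of fun i j =>
    if hi : (i : ℕ) < 3 then
      if hj : (j : ℕ) < 3 then A ⟨(i : ℕ), hi⟩ ⟨(j : ℕ), hj⟩
      else a ⟨(i : ℕ), hi⟩
    else if (i : ℕ) = (j : ℕ) then 1 else 0

/-- `SE(3)` (the homogeneous Galilean group `HG(3)` of the paper): 4×4 block matrices
`[[A, a], [0, 1]]` with `A ∈ SO(3)`, `a ∈ ℝ³`. -/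
def SE3 (B : Mat4) : Prop := ∃ (A : Mat3) (a : V3), SO3 A ∧ B = se3mk A a

/-- The 4×4 block matrix `[[ω^∧, u], [0, 0]]`. -/
def se3algMk (ω u : V3) : Mat4 :=
  Matrix.of fun i j =>
    if hi : (i : ℕ) < 3 then
      if hj : (j : ℕ) < 3 then wedge ω ⟨(i : ℕ), hi⟩ ⟨(j : ℕ), hj⟩
      else u ⟨(i : ℕ), hi⟩
    else 0

/-- `se(3)`: 4×4 block matrices `[[ω^∧, u], [0, 0]]` with `ω, u ∈ ℝ³`. -/
def se3Alg (M : Mat4) : Prop := ∃ ω u : V3, M = se3algMk ω u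

/-- The product of the group `A = (SE(3) ⋉ se(3)) × ℝ³`:
`(B_X, β_X, c_X)(B_Y, β_Y, c_Y) = (B_X B_Y, β_X + B_X β_Y B_X⁻¹, c_X + c_Y)`. -/
def dpMul (X Y : Mat4 × Mat4 × V3) : Mat4 × Mat4 × V3 :=
  (X.1 * Y.1, X.2.1 + X.1 * Y.2.1 * X.1⁻¹, X.2.2 + Y.2.2)

/-- The action `φ((B, β, c), (P, Bᵦ, p)) = (P B, B⁻¹ (Bᵦ − β) B, p + c)` of
`A = (SE(3) ⋉ se(3)) × ℝ³` on `M = SE(3) × se(3) × ℝ³`. -/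
def phiDP (B β : Mat4) (c : V3) (P Bb : Mat4) (p : V3) : Mat4 × Mat4 × V3 :=
  (P * B, B⁻¹ * (Bb - β) * B, p + c)

/-!
An element `[[A, a], [0, 1]]` of SE(3) is invertible with inverse `[[Aᵀ, -Aᵀ a], [0, 1]]`, so SE(3) is
closed under products and inverses. Conjugating `[[ω^∧, u], [0, 0]]` by it gives a matrix whose
upper-left block `A ω^∧ Aᵀ` is again skew-symmetric, hence a wedge, so se(3) is stable under
conjugation by SE(3); this makes φ well defined. The action axioms are then matrix identities that
only use `B⁻¹ B = 1`, and transitivity is witnessed by `B = P₁⁻¹ P₂`, `β = B₁ - B B₂ B⁻¹`,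
`c = p₂ - p₁`.
-/

/-- The 4×4 block matrix `[[A, a], [0, s]]`. -/
def affineBlock (A : Mat3) (a : V3) (s : ℝ) : Mat4 :=
  Matrix.of fun i j =>
    if hi : (i : ℕ) < 3 then
      if hj : (j : ℕ) < 3 then A ⟨(i : ℕ), hi⟩ ⟨(j : ℕ), hj⟩
      else a ⟨(i : ℕ), hi⟩
    else if (j : ℕ) < 3 then 0 else s

lemma se3mk_eq_affineBlock (A : Mat3) (a : V3) : se3mk A a = affineBlock A a 1 := by
  ext i j; fin_cases i <;> fin_cases j <;> rfl

lemma se3algMk_eq_affineBlock (ω u : V3) : se3algMk ω u = affineBlock (wedge ω) u 0 := by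
  ext i j; fin_cases i <;> fin_cases j <;> rfl

lemma affineBlock_mul (A B : Mat3) (a b : V3) (s t : ℝ) :
    affineBlock A a s * affineBlock B b t = affineBlock (A * B) (A *ᵥ b + t • a) (s * t) := by
  ext i j
  fin_cases i <;> fin_cases j <;>
    simp [affineBlock, Matrix.mul_apply, Fin.sum_univ_four, Matrix.mulVec, dotProduct,
      Fin.sum_univ_three] <;> ring

lemma affineBlock_sub (A B : Mat3) (a b : V3) (s t : ℝ) :
    affineBlock A a s - affineBlock B b t = affineBlock (A - B) (a - b) (s - t) := by
  ext i j; fin_cases i <;> fin_cases j <;> simp [affineBlock]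

lemma affineBlock_one : affineBlock 1 0 1 = 1 := by
  ext i j; fin_cases i <;> fin_cases j <;> simp [affineBlock, Matrix.one_apply]

lemma wedge_sub (x y : V3) : wedge x - wedge y = wedge (x - y) := by
  ext i j; fin_cases i <;> fin_cases j <;> simp [wedge] <;> ring

lemma exists_wedge_of_transpose_eq_neg {M : Mat3} (h : Mᵀ = -M) : ∃ ω : V3, M = wedge ω := by
  have hM : ∀ i j, M j i = -M i j := fun i j => congrFun (congrFun h i) j
  refine ⟨![M 2 1, M 0 2, M 1 0], ?_⟩
  ext i j
  fin_cases i <;> fin_cases j <;> simp [wedge] <;>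
    linarith [hM 0 0, hM 1 1, hM 2 2, hM 0 1, hM 0 2, hM 1 2]

namespace SO3

lemma mul_transpose {A : Mat3} (hA : SO3 A) : A * Aᵀ = 1 :=
  mul_eq_one_comm.mp hA.1

lemma transpose_s8 {A : Mat3} (hA : SO3 A) : SO3 Aᵀ :=
  ⟨by rw [transpose_transpose, hA.mul_transpose], by rw [det_transpose, hA.2]⟩

lemma mul_s8 {A B : Mat3} (hA : SO3 A) (hB : SO3 B) : SO3 (A * B) := by
  refine ⟨?_, by rw [det_mul, hA.2, hB.2, mul_one]⟩
  calc (A * B)ᵀ * (A * B) = Bᵀ * (Aᵀ * A) * B := by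
        rw [transpose_mul, Matrix.mul_assoc, Matrix.mul_assoc, Matrix.mul_assoc]
    _ = 1 := by rw [hA.1, Matrix.mul_one, hB.1]

end SO3

lemma se3mk_mul_se3mk_transpose {A : Mat3} (hA : SO3 A) (a : V3) :
    se3mk A a * se3mk Aᵀ (-(Aᵀ *ᵥ a)) = 1 := by
  rw [se3mk_eq_affineBlock, se3mk_eq_affineBlock, affineBlock_mul, hA.mul_transpose,
    mulVec_neg, mulVec_mulVec, hA.mul_transpose, one_mulVec, one_smul, neg_add_cancel,
    mul_one, affineBlock_one]

lemma se3mk_inv {A : Mat3} (hA : SO3 A) (a : V3) :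
    (se3mk A a)⁻¹ = se3mk Aᵀ (-(Aᵀ *ᵥ a)) :=
  inv_eq_right_inv (se3mk_mul_se3mk_transpose hA a)

namespace SE3

lemma mul_s8 {X Y : Mat4} (hX : SE3 X) (hY : SE3 Y) : SE3 (X * Y) := by
  obtain ⟨A, a, hA, rfl⟩ := hX
  obtain ⟨B, b, hB, rfl⟩ := hY
  refine ⟨A * B, A *ᵥ b + a, hA.mul_s8 hB, ?_⟩
  rw [se3mk_eq_affineBlock, se3mk_eq_affineBlock, se3mk_eq_affineBlock, affineBlock_mul,
    one_smul, mul_one]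

lemma inv {X : Mat4} (hX : SE3 X) : SE3 X⁻¹ := by
  obtain ⟨A, a, hA, rfl⟩ := hX
  exact ⟨Aᵀ, -(Aᵀ *ᵥ a), hA.transpose_s8, se3mk_inv hA a⟩

lemma mul_inv_cancel {X : Mat4} (hX : SE3 X) : X * X⁻¹ = 1 := by
  obtain ⟨A, a, hA, rfl⟩ := hX
  rw [se3mk_inv hA a, se3mk_mul_se3mk_transpose hA a]

lemma inv_mul_cancel {X : Mat4} (hX : SE3 X) : X⁻¹ * X = 1 :=
  mul_eq_one_comm.mp hX.mul_inv_cancel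

end SE3

namespace se3Alg

lemma sub {X Y : Mat4} (hX : se3Alg X) (hY : se3Alg Y) : se3Alg (X - Y) := by
  obtain ⟨ω, u, rfl⟩ := hX
  obtain ⟨ω', u', rfl⟩ := hY
  refine ⟨ω - ω', u - u', ?_⟩
  rw [se3algMk_eq_affineBlock, se3algMk_eq_affineBlock, se3algMk_eq_affineBlock,
    affineBlock_sub, wedge_sub, sub_zero]

lemma se3mk_mul_mul_se3mk_transpose {γ : Mat4} (hγ : se3Alg γ) (A : Mat3) (a b : V3) :
    se3Alg (se3mk A a * γ * se3mk Aᵀ b) := by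
  obtain ⟨ω, u, rfl⟩ := hγ
  have hskew : (A * wedge ω * Aᵀ)ᵀ = -(A * wedge ω * Aᵀ) := by
    simp only [transpose_mul, transpose_transpose, wedge_transpose, Matrix.mul_neg,
      Matrix.neg_mul, Matrix.mul_assoc]
  obtain ⟨ω', hω'⟩ := exists_wedge_of_transpose_eq_neg hskew
  refine ⟨ω', (A * wedge ω) *ᵥ b + A *ᵥ u, ?_⟩
  rw [se3mk_eq_affineBlock, se3mk_eq_affineBlock, se3algMk_eq_affineBlock,
    se3algMk_eq_affineBlock, affineBlock_mul, affineBlock_mul, ← hω']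
  simp

lemma conj {X γ : Mat4} (hγ : se3Alg γ) (hX : SE3 X) : se3Alg (X * γ * X⁻¹) := by
  obtain ⟨A, a, hA, rfl⟩ := hX
  rw [se3mk_inv hA a]
  exact hγ.se3mk_mul_mul_se3mk_transpose A a _

lemma inv_conj {X γ : Mat4} (hγ : se3Alg γ) (hX : SE3 X) : se3Alg (X⁻¹ * γ * X) := by
  obtain ⟨A, a, hA, rfl⟩ := hX
  rw [se3mk_inv hA a]
  simpa only [transpose_transpose] using hγ.se3mk_mul_mul_se3mk_transpose Aᵀ _ a

end se3Alg

lemma conj_conj_of_mul_eq_one {M : Type*} [Monoid M] {b b' : M} (h : b' * b = 1) (x : M) :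
    b' * (b * x * b') * b = x := by
  rw [← mul_assoc, ← mul_assoc, h, one_mul, mul_assoc, h, mul_one]

def actDP (g ξ : Mat4 × Mat4 × V3) : Mat4 × Mat4 × V3 :=
  phiDP g.1 g.2.1 g.2.2 ξ.1 ξ.2.1 ξ.2.2

lemma actDP_actDP {BX BY : Mat4} (hBY : BY⁻¹ * BY = 1) (βX βY : Mat4) (cX cY : V3)
    (ξ : Mat4 × Mat4 × V3) :
    actDP (BX, βX, cX) (actDP (BY, βY, cY) ξ) = actDP (dpMul (BY, βY, cY) (BX, βX, cX)) ξ := by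
  obtain ⟨P, Bb, p⟩ := ξ
  have hβ : BY⁻¹ * (Bb - (βY + BY * βX * BY⁻¹)) * BY = BY⁻¹ * (Bb - βY) * BY - βX := by
    rw [← sub_sub, Matrix.mul_sub, Matrix.sub_mul, conj_conj_of_mul_eq_one hBY]
  simp only [actDP, phiDP, dpMul, Prod.mk.injEq]
  refine ⟨Matrix.mul_assoc P BY BX, ?_, add_assoc p cY cX⟩
  rw [Matrix.mul_inv_rev, ← hβ]
  simp only [Matrix.mul_assoc]

lemma phiDP_inv_mul_eq {P₁ P₂ : Mat4} (hP₁ : P₁ * P₁⁻¹ = 1)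
    (hB : (P₁⁻¹ * P₂)⁻¹ * (P₁⁻¹ * P₂) = 1) (B₁ B₂ : Mat4) (p₁ p₂ : V3) :
    phiDP (P₁⁻¹ * P₂) (B₁ - P₁⁻¹ * P₂ * B₂ * (P₁⁻¹ * P₂)⁻¹) (p₂ - p₁) P₁ B₁ p₁
      = (P₂, B₂, p₂) := by
  rw [phiDP, sub_sub_cancel, conj_conj_of_mul_eq_one hB, ← Matrix.mul_assoc, hP₁,
    Matrix.one_mul, add_sub_cancel]

/-- `φ` is a transitive right group action of `A = (SE(3) ⋉ se(3)) × ℝ³` on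
`M = SE(3) × se(3) × ℝ³`. -/
theorem stmt8 :
    -- φ maps M into M
    (∀ (B β : Mat4) (c : V3) (P Bb : Mat4) (p : V3),
      SE3 B → se3Alg β → SE3 P → se3Alg Bb →
      SE3 (phiDP B β c P Bb p).1 ∧ se3Alg (phiDP B β c P Bb p).2.1) ∧
    -- identity axiom: φ((I₄, 0, 0), ξ) = ξ
    (∀ (P Bb : Mat4) (p : V3), phiDP 1 0 0 P Bb p = (P, Bb, p)) ∧
    -- compatibility axiom: φ(X, φ(Y, ξ)) = φ(Y X, ξ)
    (∀ (BX βX : Mat4) (cX : V3) (BY βY : Mat4) (cY : V3)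
        (P Bb : Mat4) (p : V3),
      SE3 BX → se3Alg βX → SE3 BY → se3Alg βY → SE3 P → se3Alg Bb →
      phiDP BX βX cX (phiDP BY βY cY P Bb p).1 (phiDP BY βY cY P Bb p).2.1
        (phiDP BY βY cY P Bb p).2.2
        = phiDP (dpMul (BY, βY, cY) (BX, βX, cX)).1
            (dpMul (BY, βY, cY) (BX, βX, cX)).2.1
            (dpMul (BY, βY, cY) (BX, βX, cX)).2.2 P Bb p) ∧
    -- transitivity
    (∀ (P₁ B₁ : Mat4) (p₁ : V3) (P₂ B₂ : Mat4) (p₂ : V3),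
      SE3 P₁ → se3Alg B₁ → SE3 P₂ → se3Alg B₂ →
      ∃ (B β : Mat4) (c : V3), SE3 B ∧ se3Alg β ∧
        phiDP B β c P₁ B₁ p₁ = (P₂, B₂, p₂)) := by
  refine ⟨fun B β c P Bb p hB hβ hP hBb => ⟨hP.mul_s8 hB, (hBb.sub hβ).inv_conj hB⟩,
    fun P Bb p => by simp [phiDP], ?_, ?_⟩
  · intro BX βX cX BY βY cY P Bb p _ _ hBY _ _ _
    exact actDP_actDP hBY.inv_mul_cancel βX βY cX cY (P, Bb, p)
  · intro P₁ B₁ p₁ P₂ B₂ p₂ hP₁ hB₁ hP₂ hB₂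
    have hB : SE3 (P₁⁻¹ * P₂) := hP₁.inv.mul_s8 hP₂
    exact ⟨_, _, _, hB, hB₁.sub (hB₂.conj hB),
      phiDP_inv_mul_eq hP₁.mul_inv_cancel hB.inv_mul_cancel B₁ B₂ p₁ p₂⟩
end
end
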